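/- Suppose n(s,t) < ∞ for all s, t ∈ S, Γ is a finite W-digraph, Ψ is a W-graph over a subfield F of ℂ, and M(Γ)^F is isomorphic to M(Ψ) as H^F-modules. Then every connected component of Γ contains exactly one source and exactly one sink. -/

import Mathlib

open scoped Classical

noncomputable section

/-- The combinatorial data of a `W`-digraph over the index set `B` of the simple reflections:
for each label `i : B`, every vertex `v` lies on exactly one edge with label `i`, joining `v`
to `mate i v ≠ v`; `head i v` records whether `v` is the head (i.e. the edge is directed into
`v`), and `dash i v` whether that edge is dashed (as opposed to solid). -/
structure WDigraphData (B V : Type*) where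
  mate : B → V → V
  head : B → V → Bool
  dash : B → V → Bool
  mate_mate : ∀ i v, mate i (mate i v) = v
  mate_ne : ∀ i v, mate i v ≠ v
  head_mate : ∀ i v, head i (mate i v) = !(head i v)
  dash_mate : ∀ i v, dash i (mate i v) = dash i v

namespace WDigraphData

variable {B V : Type*} (Γ : WDigraphData B V)

/-- `Γ` has a solid edge `a → b` with label `i`. -/
def Solid (i : B) (a b : V) : Prop :=
  Γ.head i a = false ∧ Γ.dash i a = false ∧ Γ.mate i a = b

/-- `Γ` has a dashed edge `a ⇢ b` with label `i`. -/
def Dashed (i : B) (a b : V) : Prop :=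
  Γ.head i a = false ∧ Γ.dash i a = true ∧ Γ.mate i a = b

/-- There is a directed edge (solid or dashed) from `a` to `b` in `Γ`. -/
def DirEdge (a b : V) : Prop :=
  ∃ i, Γ.head i a = false ∧ Γ.mate i a = b

/-- `Γ.In v` is the set of labels of edges of `Γ` directed into `v`. -/
def In (v : V) : Set B := {i | Γ.head i v = true}

/-- `N_Γ(J)`: the number of vertices `v` with `In(v) = J`. -/
def N (J : Set B) : ℕ := Nat.card {v : V // Γ.In v = J}

/-- The underlying undirected graph of `Γ`. -/
def underlying : SimpleGraph V where
  Adj a b := ∃ i, Γ.mate i a = b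
  symm := by
    constructor
    rintro a b ⟨i, rfl⟩
    exact ⟨i, Γ.mate_mate i a⟩
  loopless := by
    constructor
    rintro a ⟨i, h⟩
    exact Γ.mate_ne i a h

/-- `Γ` contains a closed directed path of positive length. -/
def HasDirCycle : Prop :=
  ∃ (n : ℕ) (f : ℕ → V), 0 < n ∧ f n = f 0 ∧ ∀ k < n, Γ.DirEdge (f k) (f (k + 1))

/-- `Γ` is acyclic: it contains no closed directed path of positive length. -/
def Acyclic : Prop := ¬ Γ.HasDirCycle

/-- The connected component `c` of `Γ` is acyclic: `Γ` has no closed directed path of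
positive length lying in `c`. -/
def AcyclicComponent (c : Γ.underlying.ConnectedComponent) : Prop :=
  ¬ ∃ (n : ℕ) (f : ℕ → V), 0 < n ∧ f n = f 0 ∧
      (∀ k < n, Γ.DirEdge (f k) (f (k + 1))) ∧ Γ.underlying.connectedComponentMk (f 0) = c

/-- `Γ_J`: remove from `Γ` all edges whose labels lie outside `J`. -/
def restrict (J : Set B) : WDigraphData J V where
  mate i v := Γ.mate i v
  head i v := Γ.head i v
  dash i v := Γ.dash i v
  mate_mate i v := Γ.mate_mate i v
  mate_ne i v := Γ.mate_ne i v
  head_mate i v := Γ.head_mate i v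
  dash_mate i v := Γ.dash_mate i v

variable (K : Type*) [Field K] (q : K)

/-- The image of a basis vector `v` under the operator `τ_i` giving the action of `T_{s_i}`
on `M(Γ)`: for a solid edge `α → β` with label `i`, `T_{s_i} α = β` and
`T_{s_i} β = q²α + (q²−1)β`; for a dashed edge `α ⇢ β` with label `i`,
`T_{s_i} α = qα + (q+1)β` and `T_{s_i} β = (q²−q)α + (q²−q−1)β`. -/
def tauFun (i : B) (v : V) : V →₀ K :=
  if Γ.head i v then
    if Γ.dash i v then
      (q ^ 2 - q) • Finsupp.single (Γ.mate i v) 1 + (q ^ 2 - q - 1) • Finsupp.single v 1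
    else
      q ^ 2 • Finsupp.single (Γ.mate i v) 1 + (q ^ 2 - 1) • Finsupp.single v 1
  else
    if Γ.dash i v then
      q • Finsupp.single v 1 + (q + 1) • Finsupp.single (Γ.mate i v) 1
    else
      Finsupp.single (Γ.mate i v) 1

/-- The operator `τ_i` on the free module `M(Γ)` with basis the vertices of `Γ`. -/
def tau (i : B) : (V →₀ K) →ₗ[K] (V →₀ K) :=
  Finsupp.lsum K fun v => LinearMap.toSpanSingleton K (V →₀ K) (Γ.tauFun K q i v)

end WDigraphData

/-- The data of a `W`-graph in the sense of Gyoja: vertex set `X`, vertex labels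
`I x ⊆ B`, and edge weights `mu : X × X → F`. -/
structure WGraphData (B X F : Type*) where
  I : X → Set B
  mu : X → X → F

namespace WGraphData

variable {B X F : Type*} (Ψ : WGraphData B X F)
variable (K : Type*) [Field F] [Field K] [Algebra F K] [Fintype X] (q : K)

/-- The image of the basis vector `x` under the operator by which `T_{s_i}` acts on `M(Ψ)`:
`T_{s_i} x = −x` if `i ∈ I x`, and `T_{s_i} x = q²x + q Σ_{y, i ∈ I y} μ(y,x) y` otherwise. -/
def tauFun (i : B) (x : X) : X →₀ K :=
  if i ∈ Ψ.I x then -Finsupp.single x 1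
  else q ^ 2 • Finsupp.single x 1 +
    q • ∑ y : X, if i ∈ Ψ.I y then algebraMap F K (Ψ.mu y x) • Finsupp.single y (1 : K) else 0

/-- The operator by which `T_{s_i}` acts on the free module `M(Ψ)` with basis `X`. -/
def tau (i : B) : (X →₀ K) →ₗ[K] (X →₀ K) :=
  Finsupp.lsum K fun x => LinearMap.toSpanSingleton K (X →₀ K) (Ψ.tauFun K q i x)

/-- `N_Ψ(J)`: the number of vertices `x` with `I x = J`. -/
def N (J : Set B) : ℕ := Nat.card {x : X // Ψ.I x = J}

end WGraphData

/-- For a module structure on `M` given by an algebra morphism `ρ : H → End M` and a linear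
character `lam` of `H`, the eigenspace `M_lam = {v ∈ M | h v = lam(h) v for all h ∈ H}`. -/
def charSpace {K M H : Type*} [Field K] [AddCommGroup M] [Module K M] [Ring H] [Algebra K H]
    (ρ : H →ₐ[K] Module.End K M) (lam : H →ₐ[K] K) : Submodule K M where
  carrier := {v | ∀ h, ρ h v = lam h • v}
  add_mem' := by
    intro a b ha hb h
    rw [map_add, ha h, hb h, ← smul_add]
  zero_mem' := by
    intro h
    rw [map_zero, smul_zero]
  smul_mem' := by
    intro c a ha h
    rw [map_smul, ha h, smul_comm]

end

/-!
Let `u = RatFunc.X`. Compare three spaces attached to an `H`-module: the vectors on which every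
`T_s` acts by `u²`, the linear forms on which every `T_s` acts by `u²`, and the vectors on which
every `T_s` acts by `-1`. In `M(Γ)` the first contains the vectors that are constant on
components. Elements of the other two are determined by their values at one vertex per
component, because along an edge these values differ by nonzero factors; the linear forms even
vanish on a component containing a directed cycle, because the factor along a directed edge
vanishes at `u = 0`. In `M(Ψ)` the vertices `x` with `I x = ∅` give coordinate forms in the second
space and, by a `u`-adic argument, control the first; the vertices with `I x = S` span vectors of
the third. Hence `#components ≤ N_Ψ(∅) ≤ #acyclic components`, so `Γ` is acyclic, and
`N_Ψ(S) ≤ #components`.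

At `u = 0` the operator `T_s` on `M(Γ)` negates the heads of `s`-edges and moves their tails to
the heads, while on `M(Ψ)` it is diagonal. Specialising the traces of the products
`T_{s_1} ⋯ T_{s_k}` at `u = 0` therefore gives, for acyclic `Γ`, `#{v | J ⊆ In v} = #{x | J ⊆ I x}`
for every `J ⊆ S`, so by inclusion–exclusion `Γ` has `N_Ψ(∅)` sources and `N_Ψ(S)` sinks. Every
acyclic component has a source and a sink, so these counts leave room for exactly one of each.
-/

noncomputable section

open Finsupp

section JointEigenspace

variable {ι K M N : Type*} [Field K] [AddCommGroup M] [Module K M] [AddCommGroup N] [Module K N]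

def jointEigenspace (τ : ι → Module.End K M) (c : K) : Submodule K M :=
  ⨅ i, (τ i).eigenspace c

lemma mem_jointEigenspace {τ : ι → Module.End K M} {c : K} {m : M} :
    m ∈ jointEigenspace τ c ↔ ∀ i, τ i m = c • m := by
  simp only [jointEigenspace, Submodule.mem_iInf, Module.End.mem_eigenspace_iff]

lemma finrank_jointEigenspace_eq_of_intertwines (e : M ≃ₗ[K] N) {τ : ι → Module.End K M}
    {σ : ι → Module.End K N} (h : ∀ i m, e (τ i m) = σ i (e m)) (c : K) :
    Module.finrank K (jointEigenspace τ c) = Module.finrank K (jointEigenspace σ c) := by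
  have hmap : (jointEigenspace τ c).map (e : M →ₗ[K] N) = jointEigenspace σ c := by
    ext n
    rw [Submodule.mem_map_equiv, mem_jointEigenspace, mem_jointEigenspace]
    refine forall_congr' fun i => ?_
    rw [← e.injective.eq_iff, h, e.apply_symm_apply, map_smul, e.apply_symm_apply]
  rw [← hmap, LinearEquiv.finrank_map_eq]

lemma finrank_dual_jointEigenspace_eq_of_intertwines (e : M ≃ₗ[K] N)
    {τ : ι → Module.End K M} {σ : ι → Module.End K N} (h : ∀ i m, e (τ i m) = σ i (e m))
    (c : K) :
    Module.finrank K (jointEigenspace (fun i => (τ i).dualMap) c) =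
      Module.finrank K (jointEigenspace (fun i => (σ i).dualMap) c) := by
  refine (finrank_jointEigenspace_eq_of_intertwines e.dualMap (fun i φ => ?_) c).symm
  ext m
  simp [LinearEquiv.dualMap_apply, LinearMap.dualMap_apply, h]

lemma LinearMap.trace_list_prod_eq_of_intertwines (e : M ≃ₗ[K] N) {τ : ι → Module.End K M}
    {σ : ι → Module.End K N} (h : ∀ i m, e (τ i m) = σ i (e m)) (l : List ι) :
    LinearMap.trace K M (l.map τ).prod = LinearMap.trace K N (l.map σ).prod := by
  have hσ : σ = e.conjAlgEquiv K ∘ τ := by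
    funext i
    ext n
    simp [LinearEquiv.conjAlgEquiv_apply, h]
  rw [hσ, ← List.map_map, ← map_list_prod]
  exact (LinearMap.trace_conj' _ e).symm

end JointEigenspace

section Dimension

variable {K M : Type*} [Field K] [AddCommGroup M] [Module K M]

lemma card_le_finrank_of_linearIndependent {ι : Type*} [Finite ι] {v : ι → M}
    (hv : LinearIndependent K v) {S : Submodule K M} [FiniteDimensional K S]
    (hS : ∀ i, v i ∈ S) : Nat.card ι ≤ Module.finrank K S := by
  have := Fintype.ofFinite ι
  rw [Nat.card_eq_fintype_card, ← finrank_span_eq_card hv]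
  exact Submodule.finrank_mono (Submodule.span_le.2 (Set.range_subset_iff.2 hS))

lemma finrank_le_card_of_map_eq_zero {ι : Type*} [Finite ι] (L : M →ₗ[K] ι → K)
    {S : Submodule K M} (hL : ∀ s ∈ S, L s = 0 → s = 0) :
    Module.finrank K S ≤ Nat.card ι := by
  have := Fintype.ofFinite ι
  rw [Nat.card_eq_fintype_card, ← Module.finrank_fintype_fun_eq_card (R := K)]
  refine LinearMap.finrank_le_finrank_of_injective (f := L.domRestrict S) ?_
  rw [← LinearMap.ker_eq_bot, LinearMap.ker_eq_bot']
  intro s hs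
  exact Subtype.ext (hL s s.2 hs)

end Dimension

section Matrix

variable {ι n R : Type*} [Fintype n]

def funMatrix [Zero R] (φ : n → n) (s : n → R) : Matrix n n R :=
  fun w v => if φ v = w then s v else 0

lemma funMatrix_mul [CommSemiring R] (φ ψ : n → n) (s t : n → R) :
    funMatrix φ s * funMatrix ψ t = funMatrix (φ ∘ ψ) (fun v => s (ψ v) * t v) := by
  ext w v
  simp [funMatrix, Matrix.mul_apply, ite_mul]

lemma trace_funMatrix [AddCommMonoid R] (φ : n → n) (s : n → R) :
    (funMatrix φ s).trace = ∑ v, if φ v = v then s v else 0 := rfl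

lemma map_trace_list_prod [DecidableEq n] {S G : Type*} [CommSemiring R] [CommSemiring S]
    [FunLike G R S] [RingHomClass G R S] (φ : G) (A : ι → Matrix n n R) (l : List ι) :
    φ (l.map A).prod.trace = (l.map fun i => (A i).map φ).prod.trace := by
  rw [AddMonoidHom.map_trace, ← RingHom.coe_coe φ, ← RingHom.mapMatrix_apply, map_list_prod,
    List.map_map]
  rfl

lemma LinearMap.trace_list_prod_eq_matrix_trace {K M : Type*} [Field K] [AddCommGroup M]
    [Module K M] [DecidableEq n] (b : Module.Basis n K M) (τ : ι → Module.End K M)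
    (l : List ι) :
    LinearMap.trace K M (l.map τ).prod =
      (l.map fun i => LinearMap.toMatrix b b (τ i)).prod.trace := by
  have h : ∀ f, LinearMap.toMatrix b b f = LinearMap.toMatrixAlgEquiv b f := fun f => by
    ext
    rw [LinearMap.toMatrix_apply, LinearMap.toMatrixAlgEquiv_apply]
  simp only [LinearMap.trace_eq_matrix_trace K b, h, map_list_prod, List.map_map]
  rfl

end Matrix

section Combinatorics

lemma exists_forall_not_rel_of_not_transGen {α : Type*} [Finite α] (R : α → α → Prop)
    {s : Set α} (hs : s.Nonempty) (hR : ∀ a ∈ s, ¬ Relation.TransGen R a a) :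
    ∃ a ∈ s, ∀ b ∈ s, ¬ R a b := by
  let r : α → α → Prop := fun b a => a ∈ s ∧ Relation.TransGen R a b
  have : IsTrans α r := ⟨fun _ _ _ hab hbc => ⟨hbc.1, hbc.2.trans hab.2⟩⟩
  have : Std.Irrefl r := ⟨fun a haa => hR a haa.1 haa.2⟩
  obtain ⟨a, ha, hmin⟩ := (Finite.wellFounded_of_trans_of_irrefl r).has_min s hs
  exact ⟨a, ha, fun b hb hab => hmin b hb ⟨ha, .single hab⟩⟩

lemma Relation.TransGen.exists_seq {α : Type*} {R : α → α → Prop} {a b : α}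
    (h : Relation.TransGen R a b) :
    ∃ (n : ℕ) (f : ℕ → α), 0 < n ∧ f 0 = a ∧ f n = b ∧ ∀ k < n, R (f k) (f (k + 1)) := by
  induction h with
  | single hab => exact ⟨1, fun k => if k = 0 then a else _, one_pos, rfl, rfl, by simpa⟩
  | @tail b c _ hbc ih =>
    obtain ⟨n, f, hn, hf0, hfn, hf⟩ := ih
    refine ⟨n + 1, fun k => if k ≤ n then f k else c, n.succ_pos, by simpa, by simp, ?_⟩
    intro k hk
    rcases Nat.lt_succ_iff_lt_or_eq.1 hk with hk | rfl
    · simpa [hk.le, Nat.succ_le_of_lt hk] using hf k hk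
    · simpa [hfn] using hbc

lemma Relation.TransGen.of_seq {α : Type*} {R : α → α → Prop} {n : ℕ} {f : ℕ → α} (hn : 0 < n)
    (hf : ∀ k < n, R (f k) (f (k + 1))) : Relation.TransGen R (f 0) (f n) := by
  induction n with
  | zero => exact absurd hn (lt_irrefl 0)
  | succ n ih =>
    rcases Nat.eq_zero_or_pos n with rfl | hn'
    · exact .single (hf 0 one_pos)
    · exact (ih hn' fun k hk => hf k (hk.trans n.lt_succ_self)).tail (hf n n.lt_succ_self)

variable {ι α β : Type*} [Fintype ι] [Fintype α] [Fintype β]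

lemma card_filter_eq_empty_eq_sum (S : α → Set ι) :
    ((Finset.univ.filter fun a => S a = ∅).card : ℤ) =
      ∑ W ∈ (Finset.univ : Finset ι).powerset,
        (-1 : ℤ) ^ W.card * ((Finset.univ.filter fun a => ∀ i ∈ W, i ∈ S a).card : ℤ) := by
  let s : α → Finset ι := fun a => Finset.univ.filter (· ∈ S a)
  have hsub : ∀ W a, (∀ i ∈ W, i ∈ S a) ↔ W ⊆ s a := fun W a => by
    simp [s, Finset.subset_iff]
  have hinner : ∀ a, ∑ W ∈ (Finset.univ : Finset ι).powerset,
      (if W ⊆ s a then (-1 : ℤ) ^ W.card else 0) = if S a = ∅ then 1 else 0 := by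
    intro a
    rw [← Finset.sum_filter, show (Finset.univ.powerset.filter (· ⊆ s a)) = (s a).powerset by
      ext; simp, Finset.sum_powerset_neg_one_pow_card]
    simp [s, Finset.filter_eq_empty_iff, Set.eq_empty_iff_forall_notMem]
  simp only [Finset.card_filter, Nat.cast_sum, Nat.cast_ite, Nat.cast_one, Nat.cast_zero,
    Finset.mul_sum, mul_ite, mul_one, mul_zero, hsub]
  rw [Finset.sum_comm]
  exact Finset.sum_congr rfl fun a _ => (hinner a).symm

lemma card_filter_eq_empty_eq_of_forall_card_eq (S : α → Set ι) (T : β → Set ι)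
    (h : ∀ W : Finset ι, (Finset.univ.filter fun a => ∀ i ∈ W, i ∈ S a).card =
      (Finset.univ.filter fun b => ∀ i ∈ W, i ∈ T b).card) :
    (Finset.univ.filter fun a => S a = ∅).card = (Finset.univ.filter fun b => T b = ∅).card := by
  have hS := card_filter_eq_empty_eq_sum S
  simp only [h] at hS
  exact_mod_cast hS.trans (card_filter_eq_empty_eq_sum T).symm

lemma existsUnique_of_surjective_of_card_le {α β : Type*} [Finite α] {P : α → Prop} {f : α → β}
    (hsurj : ∀ b, ∃ a, P a ∧ f a = b) (hcard : Nat.card {a // P a} ≤ Nat.card β) (b : β) :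
    ∃! a, P a ∧ f a = b := by
  have hbij := Function.Surjective.bijective_of_nat_card_le (f := fun a : {a // P a} => f a)
    (fun b => (hsurj b).elim fun a ha => ⟨⟨a, ha.1⟩, ha.2⟩) hcard
  obtain ⟨a, ha, hfa⟩ := hsurj b
  refine ⟨a, ⟨ha, hfa⟩, fun a' ha' => ?_⟩
  exact congr_arg Subtype.val (hbij.1 (ha'.2.trans hfa.symm) : (⟨a', ha'.1⟩ : {a // P a}) = ⟨a, ha⟩)

end Combinatorics

lemma Polynomial.eq_zero_of_forall_X_sq_add_one_mul_eq {R ι : Type*} [CommRing R] [Fintype ι]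
    {p : ι → Polynomial R}
    (h : ∀ x, ∃ c : ι → Polynomial R, (X ^ 2 + 1) * p x = X * ∑ y, c y * p y) : p = 0 := by
  have hcop : ∀ n, IsCoprime ((X : Polynomial R) ^ n) (X ^ 2 + 1) := fun n =>
    IsCoprime.pow_left ⟨-X, 1, by ring⟩
  have hdvd : ∀ n x, (X : Polynomial R) ^ n ∣ p x := by
    intro n
    induction n with
    | zero => simp
    | succ n ih =>
      intro x
      obtain ⟨c, hc⟩ := h x
      refine (hcop (n + 1)).dvd_of_dvd_mul_left ?_
      rw [hc, pow_succ']
      exact mul_dvd_mul_left X (Finset.dvd_sum fun y _ => dvd_mul_of_dvd_right (ih y) _)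
  funext x
  ext d
  exact X_pow_dvd_iff.1 (hdvd (d + 1) x) d d.lt_succ_self

namespace RatFunc

variable {F : Type*} [Field F]

lemma X_sub_one_ne_zero : (X : RatFunc F) - 1 ≠ 0 := by
  rw [← algebraMap_X, ← map_one (algebraMap (Polynomial F) (RatFunc F)), ← map_sub,
    ← Polynomial.C_1]
  exact (map_ne_zero_iff _ (algebraMap_injective F)).2 (Polynomial.X_sub_C_ne_zero 1)

lemma X_add_one_ne_zero : (X : RatFunc F) + 1 ≠ 0 := by
  rw [← algebraMap_X, ← map_one (algebraMap (Polynomial F) (RatFunc F)), ← map_add,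
    ← Polynomial.C_1]
  exact (map_ne_zero_iff _ (algebraMap_injective F)).2 (Polynomial.X_add_C_ne_zero 1)

end RatFunc

namespace WDigraphData

variable {B V : Type*} (Γ : WDigraphData B V)

local notation "mkc" => Γ.underlying.connectedComponentMk

lemma mate_eq_iff {i : B} {v w : V} : Γ.mate i v = w ↔ v = Γ.mate i w := by
  constructor <;> rintro rfl <;> simp [Γ.mate_mate]

lemma head_eq_false_of_head {i : B} {v : V} (h : Γ.head i v = true) :
    Γ.head i (Γ.mate i v) = false := by
  rw [Γ.head_mate, h, Bool.not_true]

lemma connectedComponentMk_mate (i : B) (v : V) : mkc (Γ.mate i v) = mkc v :=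
  (SimpleGraph.ConnectedComponent.sound
    (show Γ.underlying.Adj v (Γ.mate i v) from ⟨i, rfl⟩).reachable).symm

lemma of_connectedComponentMk_eq {P : V → Prop} (hP : ∀ i v, P (Γ.mate i v) → P v) {a b : V}
    (h : mkc a = mkc b) (ha : P a) : P b := by
  rw [SimpleGraph.ConnectedComponent.eq, SimpleGraph.reachable_iff_reflTransGen] at h
  induction h with
  | refl => exact ha
  | tail _ hxy ih =>
    obtain ⟨i, rfl⟩ := hxy
    exact hP i _ (by rwa [Γ.mate_mate])

lemma acyclicComponent_iff (c : Γ.underlying.ConnectedComponent) :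
    Γ.AcyclicComponent c ↔ ∀ v, mkc v = c → ¬ Relation.TransGen Γ.DirEdge v v := by
  constructor
  · rintro hc v rfl hv
    obtain ⟨n, f, hn, hf0, hfn, hf⟩ := hv.exists_seq
    exact hc ⟨n, f, hn, hfn.trans hf0.symm, hf, by rw [hf0]⟩
  · rintro hc ⟨n, f, hn, hfn, hf, rfl⟩
    exact hc (f 0) rfl (hfn ▸ Relation.TransGen.of_seq hn hf)

lemma exists_in_eq_univ [Finite V] {c : Γ.underlying.ConnectedComponent}
    (hc : Γ.AcyclicComponent c) : ∃ v, Γ.In v = Set.univ ∧ mkc v = c := by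
  obtain ⟨v, hv, hsink⟩ := exists_forall_not_rel_of_not_transGen Γ.DirEdge
    (s := {v | mkc v = c}) c.exists_rep ((Γ.acyclicComponent_iff c).1 hc)
  refine ⟨v, Set.eq_univ_of_forall fun i => ?_, hv⟩
  by_contra hi
  refine hsink (Γ.mate i v) ?_ ⟨i, Bool.eq_false_iff.2 hi, rfl⟩
  exact (Γ.connectedComponentMk_mate i v).trans hv

lemma exists_in_eq_empty [Finite V] {c : Γ.underlying.ConnectedComponent}
    (hc : Γ.AcyclicComponent c) : ∃ v, Γ.In v = ∅ ∧ mkc v = c := by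
  obtain ⟨v, hv, hsource⟩ := exists_forall_not_rel_of_not_transGen (Function.swap Γ.DirEdge)
    (s := {v | mkc v = c}) c.exists_rep
    (fun v hv => Relation.transGen_swap.not.2 ((Γ.acyclicComponent_iff c).1 hc v hv))
  refine ⟨v, Set.eq_empty_of_forall_notMem fun i hi => ?_, hv⟩
  exact hsource (Γ.mate i v) ((Γ.connectedComponentMk_mate i v).trans hv)
    ⟨i, Γ.head_eq_false_of_head hi, Γ.mate_mate i v⟩

lemma finrank_le_card_of_propagates {K M : Type*} [Field K] [AddCommGroup M] [Module K M]
    [Finite V] (L : M →ₗ[K] V → K) (hL : Function.Injective L) (S : Submodule K M)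
    (C : Set Γ.underlying.ConnectedComponent)
    (hprop : ∀ s ∈ S, ∀ i v, L s (Γ.mate i v) = 0 → L s v = 0)
    (hC : ∀ s ∈ S, ∀ v, mkc v ∉ C → L s v = 0) :
    Module.finrank K S ≤ Nat.card C := by
  let rep : Γ.underlying.ConnectedComponent → V := fun c => c.exists_rep.choose
  have hrep : ∀ c, mkc (rep c) = c := fun c => c.exists_rep.choose_spec
  refine finrank_le_card_of_map_eq_zero (LinearMap.pi fun c : C => LinearMap.proj (rep c) ∘ₗ L)
    fun s hs hs0 => hL ?_
  rw [map_zero]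
  funext v
  by_cases hv : mkc v ∈ C
  · refine Γ.of_connectedComponentMk_eq (P := fun v => L s v = 0) (hprop s hs) (hrep (mkc v)) ?_
    exact congr_fun hs0 ⟨mkc v, hv⟩
  · exact hC s hs v hv

section Coeff

variable {R : Type*} [CommRing R] (q : R)

/-- The coefficient of `v` in `T_{s_i} v`. -/
def diagCoeff (i : B) (v : V) : R :=
  if Γ.head i v then (if Γ.dash i v then q ^ 2 - q - 1 else q ^ 2 - 1)
  else (if Γ.dash i v then q else 0)

/-- The coefficient of `mate i v` in `T_{s_i} v`. -/
def mateCoeff (i : B) (v : V) : R :=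
  if Γ.head i v then (if Γ.dash i v then q ^ 2 - q else q ^ 2)
  else (if Γ.dash i v then q + 1 else 1)

lemma map_diagCoeff {S G : Type*} [CommRing S] [FunLike G R S] [RingHomClass G R S] (φ : G)
    (i : B) (v : V) : φ (Γ.diagCoeff q i v) = Γ.diagCoeff (φ q) i v := by
  simp only [diagCoeff]
  split_ifs <;> simp

lemma map_mateCoeff {S G : Type*} [CommRing S] [FunLike G R S] [RingHomClass G R S] (φ : G)
    (i : B) (v : V) : φ (Γ.mateCoeff q i v) = Γ.mateCoeff (φ q) i v := by
  simp only [mateCoeff]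
  split_ifs <;> simp

lemma diagCoeff_add_mateCoeff_mate (i : B) (v : V) :
    Γ.diagCoeff q i v + Γ.mateCoeff q i (Γ.mate i v) = q ^ 2 := by
  simp only [diagCoeff, mateCoeff, Γ.head_mate, Γ.dash_mate]
  cases Γ.head i v <;> cases Γ.dash i v <;> simp only [Bool.not_false, Bool.not_true] <;>
    simp only [Bool.false_eq_true, if_true, if_false] <;> ring

/-- The matrix of `T_{s_i}` on `M(Γ)`, over any commutative ring so that `u` can be
specialised. -/
def tauMatrix (i : B) : Matrix V V R := fun w v =>
  if v = w then Γ.diagCoeff q i v else if Γ.mate i v = w then Γ.mateCoeff q i v else 0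

lemma tauMatrix_map {S G : Type*} [CommRing S] [FunLike G R S] [RingHomClass G R S] (φ : G)
    (i : B) : (Γ.tauMatrix q i).map φ = Γ.tauMatrix (φ q) i := by
  ext w v
  simp only [Matrix.map_apply, tauMatrix]
  split_ifs <;> simp [map_diagCoeff, map_mateCoeff]

end Coeff

section Field

variable {K : Type*} [Field K] (q : K)

lemma diagCoeff_add_one_ne_zero (hq₀ : q ≠ 0) (hq₁ : q - 1 ≠ 0) (hq₂ : q + 1 ≠ 0) (i : B)
    (v : V) : Γ.diagCoeff q i v + 1 ≠ 0 := by
  simp only [diagCoeff]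
  split_ifs
  · rw [show q ^ 2 - q - 1 + 1 = q * (q - 1) by ring]; exact mul_ne_zero hq₀ hq₁
  · rw [sub_add_cancel]; exact pow_ne_zero 2 hq₀
  · exact hq₂
  · rw [zero_add]; exact one_ne_zero

lemma sq_sub_diagCoeff_ne_zero (hq₀ : q ≠ 0) (hq₁ : q - 1 ≠ 0) (hq₂ : q + 1 ≠ 0) (i : B)
    (v : V) : q ^ 2 - Γ.diagCoeff q i v ≠ 0 := by
  simp only [diagCoeff]
  split_ifs
  · rw [show q ^ 2 - (q ^ 2 - q - 1) = q + 1 by ring]; exact hq₂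
  · rw [sub_sub_cancel]; exact one_ne_zero
  · rw [show q ^ 2 - q = q * (q - 1) by ring]; exact mul_ne_zero hq₀ hq₁
  · rw [sub_zero]; exact pow_ne_zero 2 hq₀

lemma tauFun_eq (i : B) (v : V) :
    Γ.tauFun K q i v =
      Γ.diagCoeff q i v • single v 1 + Γ.mateCoeff q i v • single (Γ.mate i v) 1 := by
  simp only [tauFun, diagCoeff, mateCoeff]
  cases Γ.head i v <;> cases Γ.dash i v <;> simp [add_comm]

lemma tauFun_apply (i : B) (v w : V) : Γ.tauFun K q i v w = Γ.tauMatrix q i w v := by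
  have hv : Γ.mate i v ≠ v := Γ.mate_ne i v
  simp only [tauFun_eq, tauMatrix, Finsupp.add_apply, Finsupp.smul_apply, single_apply,
    smul_eq_mul]
  split_ifs <;> simp_all

lemma tau_single (i : B) (v : V) : Γ.tau K q i (single v 1) = Γ.tauFun K q i v := by
  rw [tau, lsum_single, LinearMap.toSpanSingleton_apply_one]

lemma mateCoeff_mul_apply_single_mate {f : Module.Dual K (V →₀ K)}
    (hf : f ∈ jointEigenspace (fun i => (Γ.tau K q i).dualMap) (q ^ 2)) (i : B) (v : V) :
    Γ.mateCoeff q i v * f (single (Γ.mate i v) 1) =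
      (q ^ 2 - Γ.diagCoeff q i v) * f (single v 1) := by
  have h := LinearMap.congr_fun (mem_jointEigenspace.1 hf i) (single v 1)
  simp only [LinearMap.dualMap_apply, tau_single, tauFun_eq, map_add, map_smul, smul_eq_mul,
    LinearMap.smul_apply] at h
  linear_combination h

variable [Fintype V]

lemma tau_apply (i : B) (m : V →₀ K) (w : V) :
    Γ.tau K q i m w =
      Γ.diagCoeff q i w * m w + Γ.mateCoeff q i (Γ.mate i w) * m (Γ.mate i w) := by
  rw [tau, lsum_apply, Finsupp.sum_fintype _ _ (by simp)]
  simp only [LinearMap.toSpanSingleton_apply, finsetSum_apply, Finsupp.smul_apply, tauFun_eq,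
    Finsupp.add_apply, single_apply, smul_eq_mul, Γ.mate_eq_iff, mul_add, mul_ite, mul_one,
    mul_zero, Finset.sum_add_distrib, Finset.sum_ite_eq', Finset.mem_univ, if_true]
  ring

lemma toMatrix_tau (i : B) :
    LinearMap.toMatrix (Finsupp.basisSingleOne : Module.Basis V K (V →₀ K))
      Finsupp.basisSingleOne (Γ.tau K q i) = Γ.tauMatrix q i := by
  ext w v
  simp [LinearMap.toMatrix_apply, tau_single, tauFun_apply]

lemma equivFunOnFinite_symm_mem_jointEigenspace {g : V → K}
    (hg : ∀ i v, g (Γ.mate i v) = g v) :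
    equivFunOnFinite.symm g ∈ jointEigenspace (Γ.tau K q) (q ^ 2) := by
  refine mem_jointEigenspace.2 fun i => ?_
  ext w
  rw [tau_apply, Finsupp.smul_apply, smul_eq_mul]
  simp only [equivFunOnFinite_symm_apply_apply, hg]
  rw [← add_mul, diagCoeff_add_mateCoeff_mate]

lemma card_connectedComponent_le_finrank :
    Nat.card Γ.underlying.ConnectedComponent ≤
      Module.finrank K (jointEigenspace (Γ.tau K q) (q ^ 2)) := by
  let L := (linearEquivFunOnFinite K K V).symm.toLinearMap ∘ₗ LinearMap.funLeft K K mkc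
  have hL : Function.Injective L := by
    simp only [L, LinearMap.coe_comp, LinearEquiv.coe_coe]
    exact (LinearEquiv.injective _).comp
      (LinearMap.funLeft_injective_of_surjective _ _ _ Quot.exists_rep)
  refine card_le_finrank_of_linearIndependent
    ((Pi.basisFun K _).linearIndependent.map' L (LinearMap.ker_eq_bot.2 hL)) fun c => ?_
  exact Γ.equivFunOnFinite_symm_mem_jointEigenspace q fun i v => by
    simp [LinearMap.funLeft_apply, Γ.connectedComponentMk_mate]

lemma apply_eq_zero_of_apply_mate_eq_zero (hq₀ : q ≠ 0) (hq₁ : q - 1 ≠ 0) (hq₂ : q + 1 ≠ 0)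
    {m : V →₀ K} (hm : m ∈ jointEigenspace (Γ.tau K q) (-1)) (i : B) (v : V)
    (hmv : m (Γ.mate i v) = 0) : m v = 0 := by
  have h := congr_arg (· v) (mem_jointEigenspace.1 hm i)
  simp only [tau_apply, hmv, Finsupp.smul_apply, smul_eq_mul] at h
  refine (mul_eq_zero.1 ?_).resolve_left (Γ.diagCoeff_add_one_ne_zero q hq₀ hq₁ hq₂ i v)
  linear_combination h

lemma finrank_jointEigenspace_neg_one_le (hq₀ : q ≠ 0) (hq₁ : q - 1 ≠ 0) (hq₂ : q + 1 ≠ 0) :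
    Module.finrank K (jointEigenspace (Γ.tau K q) (-1)) ≤
      Nat.card Γ.underlying.ConnectedComponent := by
  rw [← Nat.card_univ]
  exact Γ.finrank_le_card_of_propagates Finsupp.lcoeFun DFunLike.coe_injective _ _
    (fun m hm i v => Γ.apply_eq_zero_of_apply_mate_eq_zero q hq₀ hq₁ hq₂ hm i v)
    fun _ _ v hv => absurd (Set.mem_univ _) hv

end Field

section RatFunc

variable {F : Type*} [Field F] {f : Module.Dual (RatFunc F) (V →₀ RatFunc F)}

/-- Crossing an edge `a → mate i a` multiplies `f` by `(u² - diagCoeff) / mateCoeff`, which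
vanishes at `u = 0`. -/
lemma exists_eval_zero_of_transGen
    (hf : f ∈ jointEigenspace (fun i => (Γ.tau (RatFunc F) RatFunc.X i).dualMap) (RatFunc.X ^ 2))
    {a b : V} (hab : Relation.TransGen Γ.DirEdge a b) :
    ∃ P Q : Polynomial F, P.eval 0 = 1 ∧ Q.eval 0 = 0 ∧
      algebraMap (Polynomial F) (RatFunc F) P * f (single b 1) =
        algebraMap (Polynomial F) (RatFunc F) Q * f (single a 1) := by
  have hedge : ∀ {a b}, Γ.DirEdge a b → ∃ P Q : Polynomial F, P.eval 0 = 1 ∧ Q.eval 0 = 0 ∧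
      algebraMap (Polynomial F) (RatFunc F) P * f (single b 1) =
        algebraMap (Polynomial F) (RatFunc F) Q * f (single a 1) := by
    rintro a _ ⟨i, ha, rfl⟩
    refine ⟨Γ.mateCoeff Polynomial.X i a, Polynomial.X ^ 2 - Γ.diagCoeff Polynomial.X i a,
      ?_, ?_, ?_⟩
    · rw [← Polynomial.coe_evalRingHom, map_mateCoeff]
      simp [mateCoeff, ha]
    · rw [← Polynomial.coe_evalRingHom, map_sub, map_diagCoeff]
      simp [diagCoeff, ha]
    · rw [map_sub, map_pow, map_mateCoeff, map_diagCoeff, RatFunc.algebraMap_X]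
      exact Γ.mateCoeff_mul_apply_single_mate _ hf i a
  induction hab with
  | single hab => exact hedge hab
  | tail _ hbc ih =>
    obtain ⟨P, Q, hP, hQ, h⟩ := ih
    obtain ⟨P', Q', hP', hQ', h'⟩ := hedge hbc
    refine ⟨P' * P, Q' * Q, by simp [hP, hP'], by simp [hQ'], ?_⟩
    rw [map_mul, map_mul]
    linear_combination algebraMap (Polynomial F) (RatFunc F) P * h' +
      algebraMap (Polynomial F) (RatFunc F) Q' * h

lemma apply_single_eq_zero_of_transGen_self
    (hf : f ∈ jointEigenspace (fun i => (Γ.tau (RatFunc F) RatFunc.X i).dualMap) (RatFunc.X ^ 2))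
    {v : V} (hv : Relation.TransGen Γ.DirEdge v v) : f (single v 1) = 0 := by
  obtain ⟨P, Q, hP, hQ, h⟩ := Γ.exists_eval_zero_of_transGen hf hv
  have hPQ : P - Q ≠ 0 := fun h0 => by simpa [hP, hQ] using congr_arg (Polynomial.eval 0) h0
  refine (mul_eq_zero.1 ?_).resolve_left
    ((map_ne_zero_iff _ (RatFunc.algebraMap_injective F)).2 hPQ)
  rw [map_sub, sub_mul, h, sub_self]

lemma finrank_dual_jointEigenspace_le_card_acyclic [Finite V] :
    Module.finrank (RatFunc F)
        (jointEigenspace (fun i => (Γ.tau (RatFunc F) RatFunc.X i).dualMap) (RatFunc.X ^ 2)) ≤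
      Nat.card {c | Γ.AcyclicComponent c} := by
  have hprop : ∀ f ∈ jointEigenspace (fun i => (Γ.tau (RatFunc F) RatFunc.X i).dualMap)
      (RatFunc.X ^ 2), ∀ i v, f (single (Γ.mate i v) 1) = 0 → f (single v 1) = 0 := by
    intro f hf i v hv
    have h := Γ.mateCoeff_mul_apply_single_mate _ hf i v
    rw [hv, mul_zero, eq_comm] at h
    exact (mul_eq_zero.1 h).resolve_left (Γ.sq_sub_diagCoeff_ne_zero _ RatFunc.X_ne_zero
      RatFunc.X_sub_one_ne_zero RatFunc.X_add_one_ne_zero i v)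
  refine Γ.finrank_le_card_of_propagates (Finsupp.llift _ _ _ V).symm.toLinearMap
    (LinearEquiv.injective _) _ _ (by simpa [Finsupp.llift_symm_apply] using hprop) ?_
  intro f hf v hv
  obtain ⟨u, hu, hcyc⟩ : ∃ u, mkc u = mkc v ∧ Relation.TransGen Γ.DirEdge u u := by
    simpa [acyclicComponent_iff] using hv
  simpa [Finsupp.llift_symm_apply] using Γ.of_connectedComponentMk_eq
    (P := fun v => f (single v 1) = 0) (hprop f hf) hu
    (Γ.apply_single_eq_zero_of_transGen_self hf hcyc)

end RatFunc

section Specialization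

variable {R : Type*} [CommRing R]

lemma tauMatrix_zero (i : B) :
    Γ.tauMatrix (0 : R) i = funMatrix (fun v => if Γ.head i v then v else Γ.mate i v)
      (fun v => if Γ.head i v then -1 else 1) := by
  ext w v
  have hv : Γ.mate i v ≠ v := Γ.mate_ne i v
  simp only [tauMatrix, funMatrix, diagCoeff, mateCoeff]
  cases Γ.head i v <;> cases Γ.dash i v <;> split_ifs <;> simp_all

variable [Fintype V]

lemma exists_list_prod_tauMatrix_zero (l : List B) :
    ∃ φ s, (l.map (Γ.tauMatrix (0 : R))).prod = funMatrix φ s ∧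
      ∀ v, if ∀ i ∈ l, i ∈ Γ.In v then φ v = v ∧ s v = (-1) ^ l.length
        else Relation.TransGen Γ.DirEdge v (φ v) := by
  induction l with
  | nil => exact ⟨id, 1, by ext; simp [funMatrix, Matrix.one_apply, eq_comm], fun v => by simp⟩
  | cons i l ih =>
    obtain ⟨φ, s, hprod, hφ⟩ := ih
    refine ⟨_, _, by rw [List.map_cons, List.prod_cons, hprod, tauMatrix_zero, funMatrix_mul],
      fun v => ?_⟩
    have hv := hφ v
    simp only [List.mem_cons, forall_eq_or_imp, Function.comp_apply, List.length_cons]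
    by_cases hl : ∀ i ∈ l, i ∈ Γ.In v
    · rw [if_pos hl] at hv
      rw [hv.1, hv.2]
      by_cases hi : i ∈ Γ.In v
      · have hi' : Γ.head i v = true := hi
        rw [if_pos ⟨hi, hl⟩]
        simp [hi', pow_succ']
      · have hi' : Γ.head i v = false := by simpa [In] using hi
        rw [if_neg fun h => hi h.1]
        simpa [hi'] using Relation.TransGen.single ⟨i, hi', rfl⟩
    · rw [if_neg hl] at hv
      rw [if_neg (fun h => hl h.2)]
      by_cases hi : Γ.head i (φ v)
      · simpa [hi] using hv
      · simpa [hi] using hv.tail ⟨i, by simpa using hi, rfl⟩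

lemma trace_list_prod_tauMatrix_zero (hΓ : ∀ v, ¬ Relation.TransGen Γ.DirEdge v v)
    (l : List B) :
    (l.map (Γ.tauMatrix (0 : R))).prod.trace =
      (-1) ^ l.length * (Finset.univ.filter fun v => ∀ i ∈ l, i ∈ Γ.In v).card := by
  obtain ⟨φ, s, hprod, hφ⟩ := Γ.exists_list_prod_tauMatrix_zero (R := R) l
  rw [hprod, trace_funMatrix, Finset.card_filter, Nat.cast_sum, Finset.mul_sum]
  refine Finset.sum_congr rfl fun v _ => ?_
  have hv := hφ v
  by_cases hl : ∀ i ∈ l, i ∈ Γ.In v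
  · rw [if_pos hl] at hv
    rw [if_pos hl, if_pos hv.1, hv.2, Nat.cast_one, mul_one]
  · rw [if_neg hl] at hv
    have hfix : φ v ≠ v := fun h => hΓ v (by rwa [h] at hv)
    rw [if_neg hl, if_neg hfix, Nat.cast_zero, mul_zero]

end Specialization

end WDigraphData

namespace WGraphData

variable {B X F : Type*} [Field F] (Ψ : WGraphData B X F)

def tauMatrix {R : Type*} [CommRing R] [Algebra F R] (q : R) (i : B) : Matrix X X R :=
  fun y x => if i ∈ Ψ.I x then -(if x = y then 1 else 0)
    else q ^ 2 * (if x = y then 1 else 0) +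
      q * (if i ∈ Ψ.I y then algebraMap F R (Ψ.mu y x) else 0)

lemma tauMatrix_map {R S : Type*} [CommRing R] [Algebra F R] [CommRing S] [Algebra F S]
    (φ : R →ₐ[F] S) (q : R) (i : B) :
    (Ψ.tauMatrix q i).map φ = Ψ.tauMatrix (φ q) i := by
  ext y x
  simp only [Matrix.map_apply, tauMatrix]
  split_ifs <;> simp

lemma tauMatrix_zero {R : Type*} [CommRing R] [Algebra F R] (i : B) :
    Ψ.tauMatrix (0 : R) i = funMatrix id (fun x => if i ∈ Ψ.I x then -1 else 0) := by
  ext y x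
  simp only [tauMatrix, funMatrix, id]
  split_ifs <;> simp

variable [Fintype X]

lemma list_prod_tauMatrix_zero {R : Type*} [CommRing R] [Algebra F R] (l : List B) :
    (l.map (Ψ.tauMatrix (0 : R))).prod =
      funMatrix id (fun x => if ∀ i ∈ l, i ∈ Ψ.I x then (-1) ^ l.length else 0) := by
  induction l with
  | nil => ext; simp [funMatrix, Matrix.one_apply, eq_comm]
  | cons i l ih =>
    rw [List.map_cons, List.prod_cons, ih, tauMatrix_zero, funMatrix_mul]
    congr 1
    funext x
    by_cases hi : i ∈ Ψ.I x <;> simp [hi, pow_succ']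

lemma trace_list_prod_tauMatrix_zero {R : Type*} [CommRing R] [Algebra F R] (l : List B) :
    (l.map (Ψ.tauMatrix (0 : R))).prod.trace =
      (-1) ^ l.length * (Finset.univ.filter fun x => ∀ i ∈ l, i ∈ Ψ.I x).card := by
  rw [list_prod_tauMatrix_zero, trace_funMatrix, Finset.card_filter, Nat.cast_sum,
    Finset.mul_sum]
  refine Finset.sum_congr rfl fun x _ => ?_
  simp only [id, if_true]
  split_ifs <;> simp

section Field

variable {K : Type*} [Field K] [Algebra F K] (q : K)

lemma tauFun_apply (i : B) (x y : X) : Ψ.tauFun K q i x y = Ψ.tauMatrix q i y x := by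
  have hsum : (∑ z, if i ∈ Ψ.I z then algebraMap F K (Ψ.mu z x) • single z (1 : K) else 0) y =
      if i ∈ Ψ.I y then algebraMap F K (Ψ.mu y x) else 0 := by
    rw [finsetSum_apply, Finset.sum_eq_single y] <;> intros <;> split_ifs <;>
      simp_all [Algebra.smul_def]
  simp only [tauFun, tauMatrix]
  split_ifs <;> simp only [Finsupp.neg_apply, Finsupp.add_apply, Finsupp.smul_apply, hsum,
    single_apply, smul_eq_mul] <;> simp [*]

lemma tau_single (i : B) (x : X) : Ψ.tau K q i (single x 1) = Ψ.tauFun K q i x := by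
  rw [tau, lsum_single, LinearMap.toSpanSingleton_apply_one]

lemma tau_apply (i : B) (m : X →₀ K) (x : X) :
    Ψ.tau K q i m x = ∑ y, Ψ.tauMatrix q i x y * m y := by
  rw [tau, lsum_apply, Finsupp.sum_fintype _ _ (by simp)]
  simp [finsetSum_apply, tauFun_apply, mul_comm]

lemma tau_apply_of_notMem {i : B} {x : X} (hx : i ∉ Ψ.I x) (m : X →₀ K) :
    Ψ.tau K q i m x = q ^ 2 * m x := by
  rw [tau_apply, Finset.sum_eq_single x]
  · simp [tauMatrix, hx]
  · intro y _ hyx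
    have : ¬ y = x := hyx
    simp only [tauMatrix, hx, this]
    split_ifs <;> simp_all
  · simp

lemma tau_apply_of_mem {i : B} {x : X} (hx : i ∈ Ψ.I x) (m : X →₀ K) :
    Ψ.tau K q i m x =
      -m x + q * ∑ y, if i ∈ Ψ.I y then 0 else algebraMap F K (Ψ.mu x y) * m y := by
  rw [tau_apply, Finset.mul_sum]
  trans ∑ y, ((if x = y then -m x else 0) +
    q * if i ∈ Ψ.I y then 0 else algebraMap F K (Ψ.mu x y) * m y)
  swap
  · rw [Finset.sum_add_distrib, Finset.sum_ite_eq]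
    simp
  refine Finset.sum_congr rfl fun y _ => ?_
  by_cases hy : i ∈ Ψ.I y
  · by_cases hyx : y = x
    · subst hyx
      simp [tauMatrix, hy]
    · simp [tauMatrix, hy, hyx, Ne.symm hyx]
  · have hyx : y ≠ x := by rintro rfl; exact hy hx
    simp [tauMatrix, hy, hx, hyx, Ne.symm hyx]
    ring

lemma toMatrix_tau (i : B) :
    LinearMap.toMatrix (Finsupp.basisSingleOne : Module.Basis X K (X →₀ K))
      Finsupp.basisSingleOne (Ψ.tau K q i) = Ψ.tauMatrix q i := by
  ext y x
  simp [LinearMap.toMatrix_apply, tau_single, tauFun_apply]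

lemma lapply_mem_jointEigenspace {x : X} (hx : Ψ.I x = ∅) :
    lapply x ∈ jointEigenspace (fun i => (Ψ.tau K q i).dualMap) (q ^ 2) := by
  refine mem_jointEigenspace.2 fun i => LinearMap.ext fun m => ?_
  rw [LinearMap.dualMap_apply, lapply_apply, Ψ.tau_apply_of_notMem q (by simp [hx])]
  rfl

lemma N_empty_le_finrank_dual :
    Ψ.N ∅ ≤ Module.finrank K (jointEigenspace (fun i => (Ψ.tau K q i).dualMap) (q ^ 2)) := by
  have hli := (Finsupp.basisSingleOne (R := K) (ι := X)).dualBasis.linearIndependent.comp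
    (Subtype.val : {x // Ψ.I x = ∅} → X) Subtype.val_injective
  refine card_le_finrank_of_linearIndependent hli fun x => ?_
  convert Ψ.lapply_mem_jointEigenspace q x.2
  ext m
  simp

lemma single_mem_jointEigenspace_neg_one {x : X} (hx : Ψ.I x = Set.univ) :
    single x 1 ∈ jointEigenspace (Ψ.tau K q) (-1) := by
  refine mem_jointEigenspace.2 fun i => ?_
  simp [tau_single, tauFun, hx]

lemma N_univ_le_finrank :
    Ψ.N Set.univ ≤ Module.finrank K (jointEigenspace (Ψ.tau K q) (-1)) := by
  have hli := (Finsupp.basisSingleOne (R := K) (ι := X)).linearIndependent.comp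
    (Subtype.val : {x // Ψ.I x = Set.univ} → X) Subtype.val_injective
  exact card_le_finrank_of_linearIndependent hli fun x => by
    simpa using Ψ.single_mem_jointEigenspace_neg_one q x.2

end Field

lemma eq_zero_of_mem_jointEigenspace_sq {m : X →₀ RatFunc F}
    (hm : m ∈ jointEigenspace (Ψ.tau (RatFunc F) RatFunc.X) (RatFunc.X ^ 2))
    (h₀ : ∀ x, Ψ.I x = ∅ → m x = 0) : m = 0 := by
  set alg := algebraMap (Polynomial F) (RatFunc F)
  obtain ⟨b, hb⟩ := IsLocalization.exist_integer_multiples_of_finite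
    (nonZeroDivisors (Polynomial F)) (fun x => m x)
  choose p hp using hb
  have hb0 : alg b ≠ 0 := IsFractionRing.to_map_ne_zero_of_mem_nonZeroDivisors b.2
  suffices hp0 : p = 0 by
    ext x
    have hx := hp x
    rw [hp0, Pi.zero_apply, map_zero, Algebra.smul_def, eq_comm] at hx
    exact (mul_eq_zero.1 hx).resolve_left hb0
  refine Polynomial.eq_zero_of_forall_X_sq_add_one_mul_eq fun x => ?_
  by_cases hx : Ψ.I x = ∅
  · refine ⟨0, ?_⟩
    have : alg (p x) = 0 := by rw [hp x, h₀ x hx, smul_zero]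
    rw [(map_eq_zero_iff _ (RatFunc.algebraMap_injective F)).1 this]
    simp
  obtain ⟨i, hi⟩ := Set.nonempty_iff_ne_empty.2 hx
  refine ⟨fun y => if i ∈ Ψ.I y then 0 else algebraMap F (Polynomial F) (Ψ.mu x y), ?_⟩
  have h := congr_arg (· x) (mem_jointEigenspace.1 hm i)
  simp only [Ψ.tau_apply_of_mem _ hi, Finsupp.smul_apply, smul_eq_mul] at h
  apply RatFunc.algebraMap_injective F
  have hsum : ∑ y, alg ((if i ∈ Ψ.I y then 0 else algebraMap F (Polynomial F) (Ψ.mu x y)) * p y) =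
      alg b * ∑ y, if i ∈ Ψ.I y then 0 else algebraMap F (RatFunc F) (Ψ.mu x y) * m y := by
    rw [Finset.mul_sum]
    refine Finset.sum_congr rfl fun y _ => ?_
    split_ifs
    · simp
    · rw [map_mul, hp y, Algebra.smul_def, ← IsScalarTower.algebraMap_apply]
      ring
  rw [map_mul, map_mul, map_sum, hsum, map_add, map_pow, map_one, RatFunc.algebraMap_X, hp x,
    Algebra.smul_def]
  linear_combination -alg b * h

lemma finrank_jointEigenspace_sq_le :
    Module.finrank (RatFunc F) (jointEigenspace (Ψ.tau (RatFunc F) RatFunc.X) (RatFunc.X ^ 2)) ≤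
      Ψ.N ∅ :=
  finrank_le_card_of_map_eq_zero (LinearMap.pi fun x : {x // Ψ.I x = ∅} => lapply x.1)
    fun m hm hm0 => Ψ.eq_zero_of_mem_jointEigenspace_sq hm fun x hx => by
      simpa using congr_fun hm0 ⟨x, hx⟩

end WGraphData

section Comparison

variable {B V X F : Type*} [Field F] [Fintype V] [Fintype X]
variable (Γ : WDigraphData B V) (Ψ : WGraphData B X F)

lemma trace_list_prod_tauMatrix_X_eq (e : (V →₀ RatFunc F) ≃ₗ[RatFunc F] (X →₀ RatFunc F))
    (he : ∀ i m, e (Γ.tau (RatFunc F) RatFunc.X i m) = Ψ.tau (RatFunc F) RatFunc.X i (e m))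
    (l : List B) :
    (l.map (Γ.tauMatrix (Polynomial.X : Polynomial F))).prod.trace =
      (l.map (Ψ.tauMatrix (Polynomial.X : Polynomial F))).prod.trace := by
  have h := LinearMap.trace_list_prod_eq_of_intertwines e he l
  rw [LinearMap.trace_list_prod_eq_matrix_trace Finsupp.basisSingleOne,
    LinearMap.trace_list_prod_eq_matrix_trace Finsupp.basisSingleOne] at h
  simp only [WDigraphData.toMatrix_tau, WGraphData.toMatrix_tau] at h
  apply RatFunc.algebraMap_injective F
  rw [← IsScalarTower.coe_toAlgHom' F, map_trace_list_prod, map_trace_list_prod]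
  simp only [WDigraphData.tauMatrix_map, WGraphData.tauMatrix_map]
  simpa only [IsScalarTower.coe_toAlgHom', RatFunc.algebraMap_X] using h

lemma card_filter_forall_mem_in_eq [CharZero F] (hΓ : ∀ v, ¬ Relation.TransGen Γ.DirEdge v v)
    (e : (V →₀ RatFunc F) ≃ₗ[RatFunc F] (X →₀ RatFunc F))
    (he : ∀ i m, e (Γ.tau (RatFunc F) RatFunc.X i m) = Ψ.tau (RatFunc F) RatFunc.X i (e m))
    (l : List B) :
    (Finset.univ.filter fun v => ∀ i ∈ l, i ∈ Γ.In v).card =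
      (Finset.univ.filter fun x => ∀ i ∈ l, i ∈ Ψ.I x).card := by
  have h := congr_arg (Polynomial.aeval (0 : F)) (trace_list_prod_tauMatrix_X_eq Γ Ψ e he l)
  rw [map_trace_list_prod, map_trace_list_prod] at h
  simp only [WDigraphData.tauMatrix_map, WGraphData.tauMatrix_map, Polynomial.aeval_X] at h
  rw [Γ.trace_list_prod_tauMatrix_zero hΓ, Ψ.trace_list_prod_tauMatrix_zero] at h
  exact_mod_cast mul_left_cancel₀ (pow_ne_zero _ (neg_ne_zero.2 one_ne_zero)) h

end Comparison

theorem WDigraphData.existsUnique_source_and_sink {B V X F : Type*} [Field F] [CharZero F]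
    [Finite B] [Finite V] [Fintype X] (Γ : WDigraphData B V) (Ψ : WGraphData B X F)
    (e : (V →₀ RatFunc F) ≃ₗ[RatFunc F] (X →₀ RatFunc F))
    (he : ∀ i m, e (Γ.tau (RatFunc F) RatFunc.X i m) = Ψ.tau (RatFunc F) RatFunc.X i (e m))
    (c : Γ.underlying.ConnectedComponent) :
    (∃! v, Γ.In v = ∅ ∧ Γ.underlying.connectedComponentMk v = c) ∧
      (∃! v, Γ.In v = Set.univ ∧ Γ.underlying.connectedComponentMk v = c) := by
  have := Fintype.ofFinite B
  have := Fintype.ofFinite V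
  have hcomp : Nat.card Γ.underlying.ConnectedComponent ≤ Ψ.N ∅ :=
    (Γ.card_connectedComponent_le_finrank _).trans
      ((finrank_jointEigenspace_eq_of_intertwines e he _).le.trans Ψ.finrank_jointEigenspace_sq_le)
  have hacyclic : Ψ.N ∅ ≤ Nat.card {c // Γ.AcyclicComponent c} :=
    (Ψ.N_empty_le_finrank_dual RatFunc.X).trans
      ((finrank_dual_jointEigenspace_eq_of_intertwines e he _).ge.trans
        Γ.finrank_dual_jointEigenspace_le_card_acyclic)
  have hacyc : ∀ c, Γ.AcyclicComponent c := by
    by_contra! ⟨c, hc⟩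
    exact (hcomp.trans hacyclic).not_gt (Finite.card_subtype_lt hc)
  have hcount := card_filter_forall_mem_in_eq Γ Ψ
    (fun v => (Γ.acyclicComponent_iff _).1 (hacyc _) v rfl) e he
  have hsource : Γ.N ∅ = Ψ.N ∅ := by
    simp only [WDigraphData.N, WGraphData.N, Nat.card_eq_fintype_card, Fintype.card_subtype]
    exact card_filter_eq_empty_eq_of_forall_card_eq _ _ fun W => by simpa using hcount W.toList
  have hsink : Γ.N Set.univ = Ψ.N Set.univ := by
    simpa [WDigraphData.N, WGraphData.N, Nat.card_eq_fintype_card, Fintype.card_subtype,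
      Set.eq_univ_iff_forall] using hcount (Finset.univ : Finset B).toList
  have hsink_le : Ψ.N Set.univ ≤ Nat.card Γ.underlying.ConnectedComponent :=
    (Ψ.N_univ_le_finrank RatFunc.X).trans
      ((finrank_jointEigenspace_eq_of_intertwines e he _).ge.trans
        (Γ.finrank_jointEigenspace_neg_one_le _ RatFunc.X_ne_zero RatFunc.X_sub_one_ne_zero
          RatFunc.X_add_one_ne_zero))
  exact ⟨existsUnique_of_surjective_of_card_le (fun c => Γ.exists_in_eq_empty (hacyc c))
      (hsource.trans_le (hacyclic.trans (Finite.card_subtype_le _))) c,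
    existsUnique_of_surjective_of_card_le (fun c => Γ.exists_in_eq_univ (hacyc c))
      (hsink.trans_le hsink_le) c⟩

theorem wdigraph_wgraph_unique_source_sink_general
    {B W V X : Type*} [Group W] {M : CoxeterMatrix B} (cs : CoxeterSystem M W)
    (F : Subfield ℂ)
    -- `H` is the Hecke algebra of `(W, S)` over `F(u)`, with standard basis `T`
    (H : Type*) [Ring H] [Algebra (RatFunc F) H]
    (T : W → H)
    -- `Γ` is a finite `W`-digraph, with `H^F`-module `M(Γ)^F` given by `ρ`
    [Finite V] [Finite B] (Γ : WDigraphData B V)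
    (ρ : H →ₐ[RatFunc F] Module.End (RatFunc F) (V →₀ RatFunc F))
    (hρ : ∀ i : B, ρ (T (cs.simple i)) = Γ.tau (RatFunc F) RatFunc.X i)
    -- `Ψ` is a `W`-graph over `F`, with `H^F`-module `M(Ψ)` given by `σ`
    [Fintype X] (Ψ : WGraphData B X F)
    (σ : H →ₐ[RatFunc F] Module.End (RatFunc F) (X →₀ RatFunc F))
    (hσ : ∀ i : B, σ (T (cs.simple i)) = Ψ.tau (RatFunc F) RatFunc.X i)
    -- `M(Γ)^F` is isomorphic to `M(Ψ)` as `H^F`-modules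
    (e : (V →₀ RatFunc F) ≃ₗ[RatFunc F] (X →₀ RatFunc F))
    (he : ∀ (h : H) (m : V →₀ RatFunc F), e (ρ h m) = σ h (e m)) :
    ∀ c : Γ.underlying.ConnectedComponent,
      (∃! v : V, Γ.In v = ∅ ∧ Γ.underlying.connectedComponentMk v = c) ∧
      (∃! v : V, Γ.In v = Set.univ ∧ Γ.underlying.connectedComponentMk v = c) :=
  Γ.existsUnique_source_and_sink Ψ e fun i m => by
    simpa only [hρ, hσ] using he (T (cs.simple i)) m

/-- Suppose every entry of the Coxeter matrix is finite, `Γ` is a finite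
`W`-digraph, `Ψ` is a `W`-graph over a subfield `F` of `ℂ`, and `M(Γ)^F ≅ M(Ψ)` as
`H^F`-modules.  Then every connected component of `Γ` contains exactly one source and
exactly one sink. -/
theorem wdigraph_wgraph_unique_source_sink
    {B W V X : Type*} [Group W] {M : CoxeterMatrix B} (cs : CoxeterSystem M W)
    (F : Subfield ℂ)
    -- every dihedral parabolic subgroup of `W` is finite: `n(s,t) < ∞`
    (hfin : ∀ i j : B, M i j ≠ 0)
    -- `H` is the Hecke algebra of `(W, S)` over `F(u)`, with standard basis `T`
    (H : Type*) [Ring H] [Algebra (RatFunc F) H]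
    (T : W → H) (bT : Module.Basis W (RatFunc F) H) (hbT : ∀ w, bT w = T w)
    (hT1 : T 1 = 1)
    (hTmul : ∀ (i : B) (w : W), cs.length w < cs.length (cs.simple i * w) →
      T (cs.simple i) * T w = T (cs.simple i * w))
    (hTsq : ∀ i : B, T (cs.simple i) * T (cs.simple i) =
      (RatFunc.X ^ 2 : RatFunc F) • (1 : H) +
        ((RatFunc.X ^ 2 - 1 : RatFunc F)) • T (cs.simple i))
    -- `Γ` is a finite `W`-digraph, with `H^F`-module `M(Γ)^F` given by `ρ`
    [Finite V] [Finite B] (Γ : WDigraphData B V)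
    (ρ : H →ₐ[RatFunc F] Module.End (RatFunc F) (V →₀ RatFunc F))
    (hρ : ∀ i : B, ρ (T (cs.simple i)) = Γ.tau (RatFunc F) RatFunc.X i)
    -- `Ψ` is a `W`-graph over `F`, with `H^F`-module `M(Ψ)` given by `σ`
    [Fintype X] (Ψ : WGraphData B X F)
    (σ : H →ₐ[RatFunc F] Module.End (RatFunc F) (X →₀ RatFunc F))
    (hσ : ∀ i : B, σ (T (cs.simple i)) = Ψ.tau (RatFunc F) RatFunc.X i)
    -- `M(Γ)^F` is isomorphic to `M(Ψ)` as `H^F`-modules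
    (e : (V →₀ RatFunc F) ≃ₗ[RatFunc F] (X →₀ RatFunc F))
    (he : ∀ (h : H) (m : V →₀ RatFunc F), e (ρ h m) = σ h (e m)) :
    ∀ c : Γ.underlying.ConnectedComponent,
      (∃! v : V, Γ.In v = ∅ ∧ Γ.underlying.connectedComponentMk v = c) ∧
      (∃! v : V, Γ.In v = Set.univ ∧ Γ.underlying.connectedComponentMk v = c) :=
  wdigraph_wgraph_unique_source_sink_general cs F H T Γ ρ hρ Ψ σ hσ e he

end
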